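/- arXiv:2305.08622 — 2 statements merged into one kernel-verified Lean document; each statement's English description precedes it below -/
import Mathlib

section
/- For every real q with 1/3 ≤ q ≤ 1/2, one has 2q / (1 − q + q²) + (1 − 2q) / (2q + (1 − 2q)²) ≤ 4/3, with equality at q = 1/2. -/
theorem stmt_8 (q : ℝ) (hq1 : 1 / 3 ≤ q) (hq2 : q ≤ 1 / 2) :
    2 * q / (1 - q + q ^ 2) + (1 - 2 * q) / (2 * q + (1 - 2 * q) ^ 2) ≤ 4 / 3
    ∧ 2 * (1/2 : ℝ) / (1 - 1/2 + (1/2 : ℝ) ^ 2)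
        + (1 - 2 * (1/2 : ℝ)) / (2 * (1/2) + (1 - 2 * (1/2 : ℝ)) ^ 2) = 4 / 3 := by
  constructor
  · have h1 : 0 < 1 - q + q ^ 2 := by nlinarith [sq_nonneg (q - 1/2)]
    have h2 : 0 < 2 * q + (1 - 2 * q) ^ 2 := by nlinarith
    rw [div_add_div _ _ (ne_of_gt h1) (ne_of_gt h2), div_le_div_iff₀ (by positivity) (by norm_num)]
    nlinarith [sq_nonneg (q - 1/2), sq_nonneg (q - 1/3), mul_nonneg (mul_nonneg (sub_nonneg.2 hq1) (sub_nonneg.2 hq2)) (sq_nonneg (q-1/2))]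
  · norm_num
end

section
/- Let γ be a real number with 0 < γ ≤ 3/7, let n be a natural number, and let p₁, …, p_n be reals with 0 ≤ p_i ≤ 1 for each i and Σ_{i=1}^n p_i ≤ 1. Then 1 − γ − Σ_{i=1}^n γ·p_i / (1 − p_i + p_i²) ≥ 0. -/
theorem stmt_11 (γ : ℝ) (hγ0 : 0 < γ) (hγ : γ ≤ 3 / 7)
    (n : ℕ) (p : Fin n → ℝ) (hp : ∀ i, 0 ≤ p i ∧ p i ≤ 1)
    (hsum : ∑ i, p i ≤ 1) :
    1 - γ - ∑ i, γ * p i / (1 - p i + (p i) ^ 2) ≥ 0 := by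
  have key : ∑ i, γ * p i / (1 - p i + (p i) ^ 2) ≤ ∑ i, 4 / 3 * γ * p i := by
    apply Finset.sum_le_sum
    intro i _
    obtain ⟨h0, h1⟩ := hp i
    have hD : (0:ℝ) < 1 - p i + (p i) ^ 2 := by nlinarith [sq_nonneg (2 * p i - 1)]
    rw [div_le_iff₀ hD]
    nlinarith [sq_nonneg (2 * p i - 1), mul_nonneg hγ0.le h0,
      mul_nonneg (mul_nonneg hγ0.le h0) (sq_nonneg (2 * p i - 1))]
  have h2 : ∑ i, 4 / 3 * γ * p i = 4 / 3 * γ * ∑ i, p i := by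
    rw [Finset.mul_sum]
  have h3 : 4 / 3 * γ * ∑ i, p i ≤ 4 / 3 * γ := by
    nlinarith
  linarith
end
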